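/- arXiv:2312.17123 — 3 statements merged into one kernel-verified Lean document; each statement's English description precedes it below -/
import Mathlib

section
/- Under Assumption 1, and provided that p₂(X²) < 1 almost surely, for every period t ≥ 2: E[Y_t | D₂ = 1] − E[ h_t(X²) | D₂ = 1 ] = E[Y_t(1) − Y_t(0) | D₂ = 1], where h_t(x) = E[Y_t | D = 0, X² = x] denotes the conditional expectation of Y_t given X² under the measure conditioned on the event {D = 0}. (Lemma: covariate-matching identification of the treatment-on-the-treated effect among period-2 enrollees.) -/
open MeasureTheory ProbabilityTheory MeasurableSpace Set

lemma indicator_one_preimage_singleton_one {Ω : Type*} (A : Set Ω) :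
    (A.indicator (fun _ => (1 : ℝ))) ⁻¹' {1} = A := by
  ext ω
  by_cases h : ω ∈ A <;> simp [Set.indicator_apply, h]

lemma indicator_one_integrable {Ω : Type*} [m0 : MeasurableSpace Ω] (ν : Measure Ω)
    [IsFiniteMeasure ν] {A : Set Ω} (hA : MeasurableSet A) :
    Integrable (A.indicator fun _ => (1 : ℝ)) ν :=
  (integrable_const (1 : ℝ)).indicator hA

lemma aux_condexp_mul_indicator
    {Ω : Type*} {m2 : MeasurableSpace Ω} [m0 : MeasurableSpace Ω] [StandardBorelSpace Ω]
    [Nonempty Ω]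
    (ν : Measure Ω) [IsProbabilityMeasure ν]
    {Y : Ω → ℝ} (hYm : Measurable Y) (hYi : Integrable Y ν)
    {A : Set Ω} (hA : MeasurableSet A)
    (hm2 : m2 ≤ m0)
    (hCI : CondIndepFun m2 hm2 Y (A.indicator fun _ => (1 : ℝ)) ν) :
    ν[fun ω => Y ω * A.indicator (fun _ => (1 : ℝ)) ω | m2]
      =ᵐ[ν] fun ω => (ν[Y | m2]) ω * (ν[A.indicator (fun _ => (1 : ℝ)) | m2]) ω := by
  have hindm : Measurable (A.indicator fun _ => (1 : ℝ)) := measurable_const.indicator hA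
  have hind_int : Integrable (A.indicator fun _ => (1 : ℝ)) ν := indicator_one_integrable ν hA
  have hprod_int : Integrable (fun ω => Y ω * A.indicator (fun _ => (1 : ℝ)) ω) ν := by
    refine hYi.abs.mono' ((hYm.mul hindm).aestronglyMeasurable) ?_
    refine Filter.Eventually.of_forall fun ω => ?_
    by_cases h : ω ∈ A <;> simp [Set.indicator_apply, h, abs_nonneg]
  have hker := Kernel.indepFun_iff_measure_inter_preimage_eq_mul.mp hCI
  have hae1 : ∀ᵐ ω ∂ν, ∀ q : ℚ,
      condExpKernel (mΩ := m0) ν m2 ω (Y ⁻¹' Iic (q : ℝ) ∩ A)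
        = condExpKernel (mΩ := m0) ν m2 ω (Y ⁻¹' Iic (q : ℝ))
          * condExpKernel (mΩ := m0) ν m2 ω A := by
    rw [ae_all_iff]
    intro q
    have h := hker (Iic (q : ℝ)) {1} measurableSet_Iic (measurableSet_singleton 1)
    have h' := ae_of_ae_trim hm2 h
    simpa [indicator_one_preimage_singleton_one] using h'
  have haeIndep : ∀ᵐ ω ∂ν,
      IndepFun (_mΩ := m0) Y (A.indicator fun _ => (1 : ℝ)) (condExpKernel (mΩ := m0) ν m2 ω) := by
    filter_upwards [hae1] with ω hω
    set ρ := condExpKernel (mΩ := m0) ν m2 ω with hρ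
    haveI : IsProbabilityMeasure ρ := inferInstance
    set S : Set (Set ℝ) := ⋃ q : ℚ, {Iic (q : ℝ)} with hS
    have hgen1 : MeasurableSpace.comap Y (borel ℝ)
        = MeasurableSpace.generateFrom ((Set.preimage Y) '' S) := by
      rw [Real.borel_eq_generateFrom_Iic_rat, MeasurableSpace.comap_generateFrom]
    have hPi1 : IsPiSystem ((Set.preimage Y) '' S) := by
      rintro _ ⟨s1, hs1, rfl⟩ _ ⟨s2, hs2, rfl⟩ -
      rcases Set.mem_iUnion.mp hs1 with ⟨q1, hq1⟩
      rcases Set.mem_iUnion.mp hs2 with ⟨q2, hq2⟩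
      simp only [Set.mem_singleton_iff] at hq1 hq2
      subst hq1; subst hq2
      refine ⟨Iic ((min q1 q2 : ℚ) : ℝ), Set.mem_iUnion.mpr ⟨min q1 q2, rfl⟩, ?_⟩
      rw [← Set.preimage_inter, Iic_inter_Iic, Rat.cast_min]
    have hIndepSets : IndepSets (_mΩ := m0) ((Set.preimage Y) '' S) {A} ρ := by
      rintro t1 t2 ⟨s1, hs1, rfl⟩ ht2
      rcases Set.mem_iUnion.mp hs1 with ⟨q, hq⟩
      simp only [Set.mem_singleton_iff] at hq ht2
      subst hq; subst ht2
      exact Filter.Eventually.of_forall fun _ => hω q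
    have hle1 : MeasurableSpace.generateFrom ((Set.preimage Y) '' S) ≤ m0 := by
      rw [← hgen1]
      exact hYm.comap_le
    have hle2 : MeasurableSpace.generateFrom ({A} : Set (Set Ω)) ≤ m0 :=
      MeasurableSpace.generateFrom_le (by rintro t rfl; exact hA)
    have hIndep : Indep (_mΩ := m0) (MeasurableSpace.generateFrom ((Set.preimage Y) '' S))
        (MeasurableSpace.generateFrom ({A} : Set (Set Ω))) ρ :=
      IndepSets.indep hle1 hle2 hPi1 (IsPiSystem.singleton A) rfl rfl hIndepSets
    rw [IndepFun_iff]
    intro t1 t2 ht1 ht2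
    have h1 : MeasurableSet[MeasurableSpace.generateFrom ((Set.preimage Y) '' S)] t1 := by
      rw [← hgen1]; exact ht1
    have h2 : MeasurableSet[MeasurableSpace.generateFrom ({A} : Set (Set Ω))] t2 := by
      have hmeasind : Measurable[MeasurableSpace.generateFrom ({A} : Set (Set Ω))]
          (A.indicator fun _ => (1 : ℝ)) :=
        measurable_const.indicator (measurableSet_generateFrom rfl)
      exact hmeasind.comap_le t2 ht2
    exact (Indep_iff _ _ _).mp hIndep t1 t2 h1 h2
  have hcond_prod := condExp_ae_eq_integral_condExpKernel (mΩ := m0) hm2 hprod_int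
  have hcondY := condExp_ae_eq_integral_condExpKernel (mΩ := m0) hm2 hYi
  have hcondind := condExp_ae_eq_integral_condExpKernel (mΩ := m0) hm2 hind_int
  filter_upwards [hcond_prod, hcondY, hcondind, haeIndep, hYi.condExpKernel_ae]
    with ω h1 h2 h3 h4 h5
  rw [h1, h2, h3]
  haveI : IsProbabilityMeasure (condExpKernel (mΩ := m0) ν m2 ω) := inferInstance
  exact (show IndepFun (_mΩ := m0) Y (A.indicator fun _ => (1 : ℝ))
      (condExpKernel (mΩ := m0) ν m2 ω) from h4).integral_fun_mul_eq_mul_integral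
    h5.aestronglyMeasurable (indicator_one_integrable _ hA).aestronglyMeasurable

lemma integrable_cond_of_integrable {Ω : Type*} [m0 : MeasurableSpace Ω] {ν : Measure Ω}
    [IsFiniteMeasure ν] {f : Ω → ℝ} (hf : Integrable f ν) (s : Set Ω) (hs : ν s ≠ 0) :
    Integrable f (ν[|s]) := by
  rw [ProbabilityTheory.cond]
  exact (hf.restrict).smul_measure (ENNReal.inv_ne_top.mpr hs)

lemma main_aux
    {Ω : Type*} {m2 : MeasurableSpace Ω} [m0 : MeasurableSpace Ω] [StandardBorelSpace Ω]
    [Nonempty Ω]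
    (μ : Measure Ω) [IsProbabilityMeasure μ]
    (A1 A2 : Set Ω) (hA1 : MeasurableSet A1) (hA2 : MeasurableSet A2)
    (hdisj : μ (A1 ∩ A2) = 0)
    (hm2 : m2 ≤ m0)
    (Y0 Y1 Y : ℕ → Ω → ℝ)
    (hY0meas : ∀ t, Measurable (Y0 t))
    (hY0int : ∀ t, Integrable (Y0 t) μ) (hY1int : ∀ t, Integrable (Y1 t) μ)
    (hobs2 : ∀ t, 2 ≤ t → ∀ ω ∈ A2, Y t ω = Y1 t ω)
    (hobs0 : ∀ t, ∀ ω ∈ (A1 ∪ A2)ᶜ, Y t ω = Y0 t ω)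
    (π2 : Ω → ℝ)
    (hπ2 : π2 =ᵐ[μ[|A1ᶜ]] (μ[|A1ᶜ])[A2.indicator (fun _ => (1 : ℝ)) | m2])
    (hCI2 : ∀ t, 2 ≤ t → CondIndepFun m2 hm2 (Y0 t) (A2.indicator (fun _ => (1 : ℝ))) (μ[|A1ᶜ]))
    (hov2 : ∀ᵐ ω ∂μ, π2 ω < 1)
    (t : ℕ) (ht : 2 ≤ t) :
    (∫ ω, Y t ω ∂(μ[|A2])) -
        (∫ ω, ((μ[|(A1 ∪ A2)ᶜ])[Y t | m2]) ω ∂(μ[|A2]))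
      = ∫ ω, (Y1 t ω - Y0 t ω) ∂(μ[|A2]) := by
  classical
  by_cases hA2z : μ A2 = 0
  · have hz : μ[|A2] = 0 := by
      rw [ProbabilityTheory.cond, Measure.restrict_eq_zero.mpr hA2z, smul_zero]
    simp [hz]
  -- basic measure facts
  have hA2A1 : μ (A1ᶜ ∩ A2) = μ A2 := by
    have h1 : μ A2 ≤ μ (A1ᶜ ∩ A2) + μ (A1 ∩ A2) := by
      refine (measure_mono ?_).trans (measure_union_le _ _)
      intro ω hω
      by_cases h : ω ∈ A1
      · exact Or.inr ⟨h, hω⟩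
      · exact Or.inl ⟨h, hω⟩
    rw [hdisj, add_zero] at h1
    exact le_antisymm (measure_mono Set.inter_subset_right) h1
  have hA1c : μ A1ᶜ ≠ 0 := by
    intro h
    exact hA2z (le_antisymm (hA2A1 ▸ (measure_mono Set.inter_subset_left).trans_eq h)
      zero_le)
  set ν := μ[|A1ᶜ] with hν_def
  haveI hνP : IsProbabilityMeasure ν := cond_isProbabilityMeasure hA1c
  set D : Ω → ℝ := A2.indicator (fun _ => (1 : ℝ)) with hD_def
  have hDm : Measurable D := measurable_const.indicator hA2
  have hDi : Integrable D ν := (integrable_const (1 : ℝ)).indicator hA2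
  have hνac : ν ≪ μ := cond_absolutelyContinuous
  have hνA2 : ν A2 ≠ 0 := by
    rw [hν_def, cond_apply hA1.compl]
    refine mul_ne_zero (ENNReal.inv_ne_zero.mpr (measure_ne_top μ _)) ?_
    rw [hA2A1]; exact hA2z
  have hov2ν : ∀ᵐ ω ∂ν, π2 ω < 1 := hov2.filter_mono hνac.ae_le
  have hνA2c : ν A2ᶜ ≠ 0 := by
    intro h0
    have hmem : ∀ᵐ ω ∂ν, ω ∈ A2 := by
      rw [ae_iff]
      exact h0
    have hDone : D =ᵐ[ν] fun _ => (1 : ℝ) := by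
      filter_upwards [hmem] with ω hω
      simp [hD_def, hω]
    have h1 : ν[D|m2] =ᵐ[ν] fun _ => (1 : ℝ) :=
      (condExp_congr_ae hDone).trans (by rw [condExp_const hm2])
    have h2 : π2 =ᵐ[ν] fun _ => (1 : ℝ) := hπ2.trans h1
    obtain ⟨ω, hω1, hω2⟩ := (hov2ν.and h2).exists
    rw [hω2] at hω1
    exact lt_irrefl _ hω1
  -- measure identities
  have hsetae : (A1ᶜ ∩ A2 : Set Ω) =ᵐ[μ] (A2 : Set Ω) := by
    rw [ae_eq_set]
    constructor
    · refine measure_mono_null ?_ hdisj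
      intro ω hω
      exact (hω.2 hω.1.2).elim
    · refine measure_mono_null ?_ hdisj
      intro ω hω
      exact ⟨by_contra fun h => hω.2 ⟨h, hω.1⟩, hω.1⟩
  have hE1 : μ[|A2] = ν[|A2] := by
    rw [hν_def, cond_cond_eq_cond_inter hA1.compl hA2, ProbabilityTheory.cond,
      ProbabilityTheory.cond, Measure.restrict_congr_set hsetae, measure_congr hsetae]
  have hE2 : μ[|(A1 ∪ A2)ᶜ] = ν[|A2ᶜ] := by
    rw [hν_def, cond_cond_eq_cond_inter hA1.compl hA2.compl, Set.compl_union]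
  haveI : IsProbabilityMeasure (ν[|A2]) := cond_isProbabilityMeasure hνA2
  haveI : IsProbabilityMeasure (ν[|A2ᶜ]) := cond_isProbabilityMeasure hνA2c
  -- integrability
  have hY0ν : Integrable (Y0 t) ν := integrable_cond_of_integrable (hY0int t) A1ᶜ hA1c
  have hY1ν : Integrable (Y1 t) ν := integrable_cond_of_integrable (hY1int t) A1ᶜ hA1c
  set g := ν[Y0 t|m2] with hg_def
  have hgsm : StronglyMeasurable[m2] g := stronglyMeasurable_condExp
  have hgint : Integrable g ν := integrable_condExp
  have hπ2int : Integrable π2 ν := integrable_condExp.congr hπ2.symm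
  have hmul_int : ∀ f : Ω → ℝ, Integrable f ν → AEStronglyMeasurable f ν →
      Integrable (fun ω => f ω * D ω) ν := by
    intro f hf hfm
    refine hf.abs.mono' (hfm.mul hDm.aestronglyMeasurable) ?_
    refine Filter.Eventually.of_forall fun ω => ?_
    by_cases h : ω ∈ A2 <;> simp [hD_def, Set.indicator_apply, h, abs_nonneg]
  have hY0D_int : Integrable (fun ω => Y0 t ω * D ω) ν :=
    hmul_int _ hY0ν (hY0meas t).aestronglyMeasurable
  have hgD_int : Integrable (fun ω => g ω * D ω) ν :=
    hmul_int _ hgint ((hgsm.mono hm2).aestronglyMeasurable)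
  -- product rule and tower rule
  have hP : ν[fun ω => Y0 t ω * D ω|m2] =ᵐ[ν] fun ω => g ω * π2 ω := by
    have h := aux_condexp_mul_indicator ν (hY0meas t) hY0ν hA2 hm2 (hCI2 t ht)
    refine h.trans ?_
    filter_upwards [hπ2] with ω hω
    rw [hω]
  have hgD : ν[fun ω => g ω * D ω|m2] =ᵐ[ν] fun ω => g ω * π2 ω := by
    have h := condExp_mul_of_stronglyMeasurable_left hgsm (by exact hgD_int) hDi
    have h2 : ν[fun ω => g ω * D ω|m2] = ν[g * D|m2] := rfl
    rw [h2]
    refine h.trans ?_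
    filter_upwards [hπ2] with ω hω
    show g ω * (ν[D|m2]) ω = g ω * π2 ω
    rw [hω]
  -- set integral identities
  have hindE : ∀ (f : Ω → ℝ) (s : Set Ω), MeasurableSet s →
      ∫ ω in s ∩ A2, f ω ∂ν = ∫ ω in s, f ω * D ω ∂ν := by
    intro f s hs
    rw [← setIntegral_indicator hA2]
    refine setIntegral_congr_fun hs fun ω _ => ?_
    by_cases h : ω ∈ A2 <;> simp [hD_def, Set.indicator_apply, h]
  -- the two candidate regression functions agree ν-a.e.
  set F := (ν[|A2ᶜ])[Y t|m2] with hF_def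
  have hFsm : StronglyMeasurable[m2] F := stronglyMeasurable_condExp
  have hYY0 : Y t =ᵐ[ν[|A2ᶜ]] Y0 t := by
    have hout : (ν[|A2ᶜ]) (A1 ∪ A2) = 0 := by
      rw [cond_apply hA2.compl]
      have he1 : A2ᶜ ∩ (A1 ∪ A2) = A2ᶜ ∩ A1 := by
        ext ω; by_cases h : ω ∈ A2 <;> simp [h]
      have hz : ν (A2ᶜ ∩ A1) = 0 := by
        rw [hν_def, cond_apply hA1.compl]
        have he2 : A1ᶜ ∩ (A2ᶜ ∩ A1) = ∅ := by
          ext ω; simp; tauto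
        rw [he2, measure_empty, mul_zero]
      rw [he1, hz, mul_zero]
    have hae_out : ∀ᵐ ω ∂(ν[|A2ᶜ]), ω ∈ (A1 ∪ A2)ᶜ := by
      rw [ae_iff]
      refine measure_mono_null ?_ hout
      intro ω hω
      exact not_not.mp hω
    filter_upwards [hae_out] with ω hω
    exact hobs0 t ω hω
  have hY0c : Integrable (Y0 t) (ν[|A2ᶜ]) := integrable_cond_of_integrable hY0ν A2ᶜ hνA2c
  have hgc : Integrable g (ν[|A2ᶜ]) := integrable_cond_of_integrable hgint A2ᶜ hνA2c
  have hkey0 : g =ᵐ[ν[|A2ᶜ]] (ν[|A2ᶜ])[Y0 t|m2] := by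
    refine ae_eq_condExp_of_forall_setIntegral_eq hm2 hY0c
      (fun s _ _ => hgc.integrableOn) (fun s hs _ => ?_) hgsm.aestronglyMeasurable
    have hs0 : MeasurableSet s := hm2 s hs
    simp only [ProbabilityTheory.cond, Measure.restrict_smul, integral_smul_measure,
      Measure.restrict_restrict hs0]
    congr 1
    have hsplit : ∀ f : Ω → ℝ, Integrable f ν →
        ∫ ω in s ∩ A2, f ω ∂ν + ∫ ω in s ∩ A2ᶜ, f ω ∂ν = ∫ ω in s, f ω ∂ν := by
      intro f hf
      have := integral_inter_add_diff (μ := ν) (f := f) (s := s) hA2 hf.integrableOn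
      rwa [Set.diff_eq] at this
    have ha : ∫ ω in s ∩ A2, Y0 t ω ∂ν = ∫ ω in s, g ω * π2 ω ∂ν := by
      rw [hindE (Y0 t) s hs0, ← setIntegral_condExp hm2 hY0D_int hs]
      exact integral_congr_ae (ae_restrict_of_ae hP)
    have hb : ∫ ω in s ∩ A2, g ω ∂ν = ∫ ω in s, g ω * π2 ω ∂ν := by
      rw [hindE g s hs0, ← setIntegral_condExp hm2 hgD_int hs]
      exact integral_congr_ae (ae_restrict_of_ae hgD)
    have hc : ∫ ω in s, g ω ∂ν = ∫ ω in s, Y0 t ω ∂ν := setIntegral_condExp hm2 hY0ν hs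
    have h1 := hsplit (Y0 t) hY0ν
    have h2 := hsplit g hgint
    linarith
  have hFg_cond : F =ᵐ[ν[|A2ᶜ]] g := (condExp_congr_ae hYY0).trans hkey0.symm
  -- upgrade to ν-a.e. equality using overlap
  have hNmeas_eq : MeasurableSet[m2] {ω | F ω = g ω} :=
    measurableSet_eq_fun hFsm.measurable hgsm.measurable
  set N := {ω | ¬ F ω = g ω} with hN_def
  have hNmeas : MeasurableSet[m2] N := hNmeas_eq.compl
  have hN0 : (ν[|A2ᶜ]) N = 0 := ae_iff.mp hFg_cond
  have hνN_inter : ν (A2ᶜ ∩ N) = 0 := by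
    rw [cond_apply hA2.compl] at hN0
    rcases mul_eq_zero.mp hN0 with h | h
    · exact absurd (ENNReal.inv_eq_zero.mp h) (measure_ne_top ν _)
    · exact h
  have hNν : ν N = 0 := by
    have hNmeas0 : MeasurableSet N := hm2 _ hNmeas
    have hI : ∫ ω in N, (1 - D ω) ∂ν = 0 := by
      have he : (fun ω => 1 - D ω) = A2ᶜ.indicator (fun _ => (1 : ℝ)) := by
        ext ω; by_cases h : ω ∈ A2 <;> simp [hD_def, Set.indicator_apply, h]
      rw [he, setIntegral_indicator hA2.compl, setIntegral_const, Set.inter_comm, measureReal_def, hνN_inter]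
      simp
    have h1D_int : Integrable (fun ω => 1 - D ω) ν := (integrable_const (1 : ℝ)).sub hDi
    have hI2 : ∫ ω in N, (1 - D ω) ∂ν = ∫ ω in N, (1 - π2 ω) ∂ν := by
      rw [← setIntegral_condExp hm2 h1D_int hNmeas]
      refine integral_congr_ae (ae_restrict_of_ae ?_)
      have hsub := condExp_sub (μ := ν) (m := m2) (integrable_const (1 : ℝ)) hDi
      have h2 : ν[fun ω => 1 - D ω|m2] = ν[(fun _ => (1 : ℝ)) - D|m2] := rfl
      rw [h2]
      refine hsub.trans ?_
      filter_upwards [hπ2] with ω hω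
      show (ν[fun _ => (1 : ℝ)|m2]) ω - (ν[D|m2]) ω = 1 - π2 ω
      rw [condExp_const hm2, ← hω]
    have hpos : ∀ᵐ ω ∂ν.restrict N, 0 < 1 - π2 ω :=
      ae_restrict_of_ae (hov2ν.mono fun ω h => by linarith)
    have hintN : Integrable (fun ω => 1 - π2 ω) (ν.restrict N) :=
      ((integrable_const (1 : ℝ)).sub hπ2int).restrict
    have h0 : (fun ω => 1 - π2 ω) =ᵐ[ν.restrict N] 0 :=
      (integral_eq_zero_iff_of_nonneg_ae (hpos.mono fun ω h => h.le) hintN).mp (hI2 ▸ hI)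
    have hfalse : ∀ᵐ ω ∂ν.restrict N, False := by
      filter_upwards [hpos, h0] with ω h1 h2
      simp only [Pi.zero_apply] at h2
      linarith
    have h3 : ν.restrict N Set.univ = 0 := by
      simpa using ae_iff.mp hfalse
    rwa [Measure.restrict_apply_univ] at h3
  have hFg : F =ᵐ[ν] g := by
    rw [Filter.EventuallyEq, ae_iff]
    exact hNν
  -- final computation
  have hconv : ∀ f : Ω → ℝ, ∫ ω, f ω ∂(ν[|A2]) = ((ν A2)⁻¹).toReal * ∫ ω in A2, f ω ∂ν :=
    fun f => by rw [ProbabilityTheory.cond, integral_smul_measure, smul_eq_mul]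
  have hindE' : ∀ f : Ω → ℝ, ∫ ω in A2, f ω ∂ν = ∫ ω, f ω * D ω ∂ν := by
    intro f
    have h := hindE f Set.univ MeasurableSet.univ
    simpa using h
  have hmemA2 : ∀ᵐ ω ∂(ν[|A2]), ω ∈ A2 := by
    rw [ae_iff]
    have h : (ν[|A2]) A2ᶜ = 0 := by
      rw [cond_apply hA2]
      simp
    exact h
  have hYY1 : Y t =ᵐ[ν[|A2]] Y1 t := by
    filter_upwards [hmemA2] with ω hω
    exact hobs2 t ht ω hω
  have hY1c2 : Integrable (Y1 t) (ν[|A2]) := integrable_cond_of_integrable hY1ν A2 hνA2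
  have hY0c2 : Integrable (Y0 t) (ν[|A2]) := integrable_cond_of_integrable hY0ν A2 hνA2
  have hFg2 : F =ᵐ[ν[|A2]] g := cond_absolutelyContinuous.ae_eq hFg
  have hfinal : ∫ ω, F ω ∂(ν[|A2]) = ∫ ω, Y0 t ω ∂(ν[|A2]) := by
    calc ∫ ω, F ω ∂(ν[|A2]) = ∫ ω, g ω ∂(ν[|A2]) := integral_congr_ae hFg2
      _ = ((ν A2)⁻¹).toReal * ∫ ω in A2, g ω ∂ν := hconv g
      _ = ((ν A2)⁻¹).toReal * ∫ ω, g ω * D ω ∂ν := by rw [hindE' g]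
      _ = ((ν A2)⁻¹).toReal * ∫ ω, (ν[fun ω => g ω * D ω|m2]) ω ∂ν := by
            rw [integral_condExp hm2]
      _ = ((ν A2)⁻¹).toReal * ∫ ω, g ω * π2 ω ∂ν := by rw [integral_congr_ae hgD]
      _ = ((ν A2)⁻¹).toReal * ∫ ω, (ν[fun ω => Y0 t ω * D ω|m2]) ω ∂ν := by
            rw [integral_congr_ae hP]
      _ = ((ν A2)⁻¹).toReal * ∫ ω, Y0 t ω * D ω ∂ν := by rw [integral_condExp hm2]
      _ = ((ν A2)⁻¹).toReal * ∫ ω in A2, Y0 t ω ∂ν := by rw [hindE' (Y0 t)]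
      _ = ∫ ω, Y0 t ω ∂(ν[|A2]) := (hconv (Y0 t)).symm
  rw [hE1, hE2, ← hF_def, integral_congr_ae hYY1, integral_sub hY1c2 hY0c2, hfinal]

section Main
open MeasureTheory ProbabilityTheory MeasurableSpace

/-- **Lemma (Leung–Pei): covariate-matching identification for period-2 enrollees.**
Under Assumption 1 and overlap `p₂(X²) < 1` a.s., for `t ≥ 2`,
`E[Y_t | D₂ = 1] − E[E[Y_t | D = 0, X²] | D₂ = 1] = E[Y_t(1) − Y_t(0) | D₂ = 1]`. -/
theorem lemma_covariate_matching_identification_period2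
    {Ω : Type*} (m1 m2 : MeasurableSpace Ω) [m0 : MeasurableSpace Ω] [StandardBorelSpace Ω] [Nonempty Ω]
    (μ : Measure Ω) [IsProbabilityMeasure μ]
    (A1 A2 : Set Ω) (hA1 : MeasurableSet A1) (hA2 : MeasurableSet A2)
    (hdisj : μ (A1 ∩ A2) = 0)
    (hm1 : m1 ≤ m0) (hm12 : m1 ≤ m2) (hm2 : m2 ≤ m0)
    (Y0 Y1 Y : ℕ → Ω → ℝ)
    (hY0meas : ∀ t, Measurable (Y0 t)) (hY1meas : ∀ t, Measurable (Y1 t))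
    (hYmeas : ∀ t, Measurable (Y t))
    (hY0int : ∀ t, Integrable (Y0 t) μ) (hY1int : ∀ t, Integrable (Y1 t) μ)
    -- observation rule
    (hobs1 : ∀ t, 1 ≤ t → ∀ ω ∈ A1, Y t ω = Y1 t ω)
    (hobs2 : ∀ t, 2 ≤ t → ∀ ω ∈ A2, Y t ω = Y1 t ω)
    (hobs0 : ∀ t, ∀ ω ∈ (A1 ∪ A2)ᶜ, Y t ω = Y0 t ω)
    -- propensity scores
    (π1 π2 : Ω → ℝ)
    (hπ1meas : Measurable[m1] π1) (hπ2meas : Measurable[m2] π2)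
    (hπ1 : π1 =ᵐ[μ[|A2ᶜ]] (μ[|A2ᶜ])[A1.indicator (fun _ => (1 : ℝ)) | m1])
    (hπ2 : π2 =ᵐ[μ[|A1ᶜ]] (μ[|A1ᶜ])[A2.indicator (fun _ => (1 : ℝ)) | m2])
    -- Assumption 1 (dynamic conditional independence)
    (hCI1 : ∀ t, 1 ≤ t → CondIndepFun m1 hm1 (Y0 t) (A1.indicator (fun _ => (1 : ℝ))) μ)
    (hCI2 : ∀ t, 2 ≤ t → CondIndepFun m2 hm2 (Y0 t) (A2.indicator (fun _ => (1 : ℝ))) (μ[|A1ᶜ]))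
    -- overlap
    (hov2 : ∀ᵐ ω ∂μ, π2 ω < 1)
    (t : ℕ) (ht : 2 ≤ t) :
    (∫ ω, Y t ω ∂(μ[|A2])) -
        (∫ ω, ((μ[|(A1 ∪ A2)ᶜ])[Y t | m2]) ω ∂(μ[|A2]))
      = ∫ ω, (Y1 t ω - Y0 t ω) ∂(μ[|A2]) := by
  exact main_aux (m2 := m2) (m0 := m0) μ A1 A2 hA1 hA2 hdisj hm2 Y0 Y1 Y
    (fun s => (hY0meas s)) hY0int hY1int hobs2 hobs0
    π2 hπ2 hCI2 hov2 t ht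

end Main
end

section
/- Assume: (i) the pair (D₁, {Y_t(0)}_{t∈ℤ}) is independent of υ; and (ii) the family {Y_t(0)}_{t∈ℤ} is jointly independent of D₁ conditional on X¹. Then the pair (υ, {Y_t(0)}_{t∈ℤ}) is independent of D₁ conditional on X¹. -/
open MeasureTheory ProbabilityTheory MeasurableSpace

/-! Write `Y = {Y_t(0)}` and `D = D₁`. Since `X¹` is a function of `Y`, conditioning on `X¹` can
be done in two steps through `σ(Y, D)`, which is independent of `υ`; hence `υ` factors out:
`P(υ ∈ S, B | X¹) = P(υ ∈ S) · P(B | X¹)` for every `B ∈ σ(Y, D)`. Applied to `B = {Y ∈ T, D ∈ U}`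
and to `B = {Y ∈ T}`, this turns the product rule for `(Y, D)` given `X¹` into the product rule
for `((υ, Y), D)` on the π-system of sets `{υ ∈ S, Y ∈ T}`, which generates `σ(υ, Y)`. -/

theorem IsPiSystem.image2_inter {Ω : Type*} {C D : Set (Set Ω)} (hC : IsPiSystem C)
    (hD : IsPiSystem D) : IsPiSystem (Set.image2 (· ∩ ·) C D) := by
  rintro _ ⟨a, ha, b, hb, rfl⟩ _ ⟨c, hc, d, hd, rfl⟩ hne
  rw [Set.inter_inter_inter_comm] at hne ⊢
  exact Set.mem_image2_of_mem (hC a ha c hc hne.left) (hD b hb d hd hne.right)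

namespace MeasurableSpace

variable {Ω : Type*}

theorem generateFrom_image2_inter_measurableSet (m₁ m₂ : MeasurableSpace Ω) :
    generateFrom (Set.image2 (· ∩ ·) {s | MeasurableSet[m₁] s} {s | MeasurableSet[m₂] s})
      = m₁ ⊔ m₂ := by
  apply le_antisymm
  · refine generateFrom_le ?_
    rintro _ ⟨a, ha, b, hb, rfl⟩
    exact (le_sup_left (a := m₁) _ ha).inter (le_sup_right (a := m₁) _ hb)
  · refine sup_le (fun a ha => ?_) (fun b hb => ?_)
    · exact measurableSet_generateFrom ⟨a, ha, Set.univ, MeasurableSet.univ, Set.inter_univ a⟩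
    · exact measurableSet_generateFrom ⟨Set.univ, MeasurableSet.univ, b, hb, Set.univ_inter b⟩

end MeasurableSpace

namespace ProbabilityTheory

variable {Ω : Type*} {m m₁ m₂ m₃ mΩ : MeasurableSpace Ω} {μ : Measure Ω} [IsFiniteMeasure μ]

theorem condExp_indicator_one_ae_eq_measureReal_of_indep (h₁ : m₁ ≤ mΩ) (h₂ : m₂ ≤ mΩ)
    (hind : Indep m₁ m₂ μ) {A : Set Ω} (hA : MeasurableSet[m₁] A) :
    μ[A.indicator (1 : Ω → ℝ) | m₂] =ᵐ[μ] fun _ => μ.real A := by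
  refine (condExp_indep_eq h₁ h₂ (stronglyMeasurable_one.indicator hA) hind).trans ?_
  exact Filter.EventuallyEq.of_eq (funext fun _ => integral_indicator_one (h₁ A hA))

theorem condExp_inter_ae_eq_measureReal_smul_of_indep (h₁ : m₁ ≤ mΩ) (h₂ : m₂ ≤ mΩ)
    (hm : m ≤ m₂) (hind : Indep m₁ m₂ μ) {A B : Set Ω} (hA : MeasurableSet[m₁] A)
    (hB : MeasurableSet[m₂] B) :
    μ⟦A ∩ B | m⟧ =ᵐ[μ] μ.real A • μ⟦B | m⟧ := by
  have hinner : μ[(A ∩ B).indicator (1 : Ω → ℝ) | m₂] =ᵐ[μ] μ.real A • B.indicator 1 := by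
    rw [Set.inter_comm, ← Set.indicator_indicator]
    refine (condExp_indicator ((integrable_const 1).indicator (h₁ A hA)) hB).trans ?_
    filter_upwards [condExp_indicator_one_ae_eq_measureReal_of_indep h₁ h₂ hind hA] with ω hω
    by_cases hωB : ω ∈ B <;> simp [hωB, hω]
  calc μ⟦A ∩ B | m⟧ =ᵐ[μ] μ[μ[(A ∩ B).indicator 1 | m₂] | m] :=
        (condExp_condExp_of_le hm h₂).symm
    _ =ᵐ[μ] μ[μ.real A • B.indicator 1 | m] := condExp_congr_ae hinner
    _ =ᵐ[μ] μ.real A • μ⟦B | m⟧ := condExp_smul _ _ _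

variable [StandardBorelSpace Ω]

theorem CondIndep.sup_left_of_indep {hm : m ≤ mΩ} (hCI : CondIndep m m₂ m₃ hm μ)
    (h₁ : m₁ ≤ mΩ) (h₂ : m₂ ≤ mΩ) (h₃ : m₃ ≤ mΩ) (hm₂₃ : m ≤ m₂ ⊔ m₃)
    (hind : Indep m₁ (m₂ ⊔ m₃) μ) :
    CondIndep m (m₁ ⊔ m₂) m₃ hm μ := by
  have h₂₃ : m₂ ⊔ m₃ ≤ mΩ := sup_le h₂ h₃
  have hprod := (condIndep_iff m m₂ m₃ hm h₂ h₃ μ).mp hCI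
  refine CondIndepSets.condIndep (sup_le h₁ h₂) h₃
    ((@isPiSystem_measurableSet Ω m₁).image2_inter (@isPiSystem_measurableSet Ω m₂))
    (@isPiSystem_measurableSet Ω m₃) (generateFrom_image2_inter_measurableSet m₁ m₂).symm
    (@generateFrom_measurableSet Ω m₃).symm ?_
  have hrect : ∀ s ∈ Set.image2 (· ∩ ·) {s | MeasurableSet[m₁] s} {s | MeasurableSet[m₂] s},
      MeasurableSet[mΩ] s := by
    rintro _ ⟨A, hA, B, hB, rfl⟩
    exact (h₁ A hA).inter (h₂ B hB)
  rw [condIndepSets_iff m hm _ {s | MeasurableSet[m₃] s} hrect (fun s hs => h₃ s hs) μ]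
  rintro _ C ⟨A, hA, B, hB, rfl⟩ hC
  have hB' : MeasurableSet[m₂ ⊔ m₃] B := le_sup_left (a := m₂) _ hB
  have hBC : MeasurableSet[m₂ ⊔ m₃] (B ∩ C) := hB'.inter (le_sup_right (a := m₂) _ hC)
  filter_upwards [condExp_inter_ae_eq_measureReal_smul_of_indep h₁ h₂₃ hm₂₃ hind hA hBC,
    condExp_inter_ae_eq_measureReal_smul_of_indep h₁ h₂₃ hm₂₃ hind hA hB',
    hprod B C hB hC] with ω hABC hAB hBC
  simp only [Set.inter_assoc, Pi.mul_apply, Pi.smul_apply, smul_eq_mul] at hABC hAB hBC ⊢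
  rw [hABC, hAB, hBC, mul_assoc]

end ProbabilityTheory

theorem lemma_augmented_conditional_independence_general
    {Ω : Type*} [m0 : MeasurableSpace Ω] [StandardBorelSpace Ω]
    (μ : Measure Ω) [IsProbabilityMeasure μ]
    (Y0 : ℤ → Ω → ℝ) (hY0 : ∀ t, Measurable (Y0 t))
    (D1 : Ω → ℝ) (hD1meas : Measurable D1)
    (υ : Ω → ℝ) (hυmeas : Measurable υ)
    (K : ℕ)
    -- (i): (D₁, {Y_t(0)}_{t∈ℤ}) ⫫ υ
    (hindep : IndepFun (fun ω => (D1 ω, fun t : ℤ => Y0 t ω)) υ μ)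
    -- (ii): {Y_t(0)}_{t∈ℤ} ⫫ D₁ | X¹, where X¹ = (Y_{−K}(0), …, Y_0(0))
    (hCI : CondIndepFun
      (MeasurableSpace.comap (fun ω => fun i : Fin (K + 1) => Y0 ((i : ℤ) - (K : ℤ)) ω)
        inferInstance)
      (Measurable.comap_le (measurable_pi_lambda _ (fun _ => hY0 _)))
      (fun ω => fun t : ℤ => Y0 t ω) D1 μ) :
    CondIndepFun
      (MeasurableSpace.comap (fun ω => fun i : Fin (K + 1) => Y0 ((i : ℤ) - (K : ℤ)) ω)
        inferInstance)
      (Measurable.comap_le (measurable_pi_lambda _ (fun _ => hY0 _)))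
      (fun ω => (υ ω, fun t : ℤ => Y0 t ω)) D1 μ := by
  have hY : Measurable fun ω t => Y0 t ω := measurable_pi_lambda _ hY0
  have hX : MeasurableSpace.comap (fun ω (i : Fin (K + 1)) => Y0 ((i : ℤ) - (K : ℤ)) ω)
      inferInstance ≤ MeasurableSpace.comap (fun ω t => Y0 t ω) inferInstance :=
    ((measurable_pi_lambda _ fun (i : Fin (K + 1)) => measurable_pi_apply ((i : ℤ) - (K : ℤ))).comp
      (comap_measurable fun ω t => Y0 t ω)).comap_le
  have hcomap_pair : ∀ f : Ω → ℝ, MeasurableSpace.comap (fun ω => (f ω, fun t : ℤ => Y0 t ω))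
      inferInstance = MeasurableSpace.comap f inferInstance
        ⊔ MeasurableSpace.comap (fun ω t => Y0 t ω) inferInstance :=
    fun f => comap_prodMk _ _
  have hind := (IndepFun_iff_Indep _ _ _).mp hindep.symm
  rw [hcomap_pair, sup_comm] at hind
  rw [condIndepFun_iff_condIndep] at hCI ⊢
  rw [hcomap_pair]
  exact hCI.sup_left_of_indep hυmeas.comap_le hY.comap_le hD1meas.comap_le
    (hX.trans le_sup_left) hind

/-- **Lemma 1(a) (Leung–Pei).** `Y0 t` is the potential-outcome process `{Y_t(0)}_{t ∈ ℤ}`, `D1`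
the (binary) period-1 enrollment indicator, `υ` the idiosyncratic selection shock, and
`X¹ = (Y_{−K}(0), …, Y_0(0))` the covariate vector.  If `(D₁, {Y_t(0)}_{t∈ℤ})` is independent of
`υ` and `{Y_t(0)}_{t∈ℤ}` is jointly independent of `D₁` conditional on `X¹`, then the pair
`(υ, {Y_t(0)}_{t∈ℤ})` is independent of `D₁` conditional on `X¹`. -/
theorem lemma_augmented_conditional_independence
    {Ω : Type*} [m0 : MeasurableSpace Ω] [StandardBorelSpace Ω] [Nonempty Ω]
    (μ : Measure Ω) [IsProbabilityMeasure μ]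
    (Y0 : ℤ → Ω → ℝ) (hY0 : ∀ t, Measurable (Y0 t))
    (D1 : Ω → ℝ) (hD1meas : Measurable D1) (hD01 : ∀ ω, D1 ω = 0 ∨ D1 ω = 1)
    (υ : Ω → ℝ) (hυmeas : Measurable υ)
    (K : ℕ)
    -- (i): (D₁, {Y_t(0)}_{t∈ℤ}) ⫫ υ
    (hindep : IndepFun (fun ω => (D1 ω, fun t : ℤ => Y0 t ω)) υ μ)
    -- (ii): {Y_t(0)}_{t∈ℤ} ⫫ D₁ | X¹, where X¹ = (Y_{−K}(0), …, Y_0(0))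
    (hCI : CondIndepFun
      (MeasurableSpace.comap (fun ω => fun i : Fin (K + 1) => Y0 ((i : ℤ) - (K : ℤ)) ω)
        inferInstance)
      (Measurable.comap_le (measurable_pi_lambda _ (fun _ => hY0 _)))
      (fun ω => fun t : ℤ => Y0 t ω) D1 μ) :
    CondIndepFun
      (MeasurableSpace.comap (fun ω => fun i : Fin (K + 1) => Y0 ((i : ℤ) - (K : ℤ)) ω)
        inferInstance)
      (Measurable.comap_le (measurable_pi_lambda _ (fun _ => hY0 _)))
      (fun ω => (υ ω, fun t : ℤ => Y0 t ω)) D1 μ :=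
  lemma_augmented_conditional_independence_general (m0 := m0) μ Y0 hY0 D1 hD1meas υ hυmeas K hindep
    hCI
end

section
/- Assume: (i) the pair (D₁, {Y_t(0)}_{t∈ℤ}) is independent of υ; (ii) the family {Y_t(0)}_{t∈ℤ} is jointly independent of D₁ conditional on X¹; and (iii) υ is continuously distributed with a density with respect to Lebesgue measure. Then for every t ≥ 1 and for j = 1, 2, the random variable Y_t(0) is independent of D₁ conditional on the pair (Y_j(0) + υ, X¹). -/
open MeasureTheory ProbabilityTheory MeasurableSpace

/-- If `h` versions the conditional probability of `B` over all of `m₁`, and `m₂` is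
independent of everything, then the set-integral identity extends to `m₁ ⊔ m₂`. -/
lemma key_setIntegral
    {Ω : Type*} {m₁ m₂ : MeasurableSpace Ω} [m0 : MeasurableSpace Ω]
    (μ : Measure Ω) [IsProbabilityMeasure μ] (hm₁ : m₁ ≤ m0) (hm₂ : m₂ ≤ m0)
    {B : Set Ω} (hB : MeasurableSet B)
    {h : Ω → ℝ} (hhm : StronglyMeasurable[m₁] h) (hhint : Integrable h μ)
    (hh0 : 0 ≤ᵐ[μ] h)
    (hCB : ∀ C, MeasurableSet[m₁] C → (μ (B ∩ C)).toReal = ∫ ω in C, h ω ∂μ)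
    (hprod : ∀ C V, MeasurableSet[m₁] C → MeasurableSet[m₂] V →
      μ (B ∩ C ∩ V) = μ (B ∩ C) * μ V)
    (hindep : Indep m₁ m₂ μ) :
    ∀ G, MeasurableSet[m₁ ⊔ m₂] G → (μ (B ∩ G)).toReal = ∫ ω in G, h ω ∂μ := by
  have hle : m₁ ⊔ m₂ ≤ m0 := sup_le hm₁ hm₂
  set ν₁ : Measure Ω := μ.restrict B with hν₁
  set ν₂ : Measure Ω := μ.withDensity (fun ω => ENNReal.ofReal (h ω)) with hν₂
  haveI : IsFiniteMeasure ν₂ := by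
    refine isFiniteMeasure_withDensity (ne_of_lt ?_)
    refine lt_of_le_of_lt (lintegral_mono (fun a => Real.ofReal_le_enorm (h a))) ?_
    exact hhint.2
  -- the π-system of intersections
  set π : Set (Set Ω) := {s | ∃ s₁ s₂, MeasurableSet[m₁] s₁ ∧ MeasurableSet[m₂] s₂ ∧
    s = s₁ ∩ s₂} with hπdef
  have hpi : IsPiSystem π := by
    rintro s ⟨s₁, s₂, hs₁, hs₂, rfl⟩ t ⟨t₁, t₂, ht₁, ht₂, rfl⟩ -
    exact ⟨s₁ ∩ t₁, s₂ ∩ t₂, hs₁.inter ht₁, hs₂.inter ht₂, by ext x; simp; tauto⟩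
  have hmem : ∀ s ∈ π, MeasurableSet[m₁ ⊔ m₂] s := by
    rintro s ⟨s₁, s₂, hs₁, hs₂, rfl⟩
    exact ((le_sup_left : m₁ ≤ m₁ ⊔ m₂) _ hs₁).inter ((le_sup_right : m₂ ≤ m₁ ⊔ m₂) _ hs₂)
  have hgen : (m₁ ⊔ m₂) = MeasurableSpace.generateFrom π := by
    refine le_antisymm (sup_le ?_ ?_) (MeasurableSpace.generateFrom_le hmem)
    · intro s hs
      exact MeasurableSpace.measurableSet_generateFrom
        ⟨s, Set.univ, hs, MeasurableSet.univ, by simp⟩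
    · intro s hs
      exact MeasurableSpace.measurableSet_generateFrom
        ⟨Set.univ, s, MeasurableSet.univ, hs, by simp⟩
  -- the integral of h
  have hInt : ∀ {G : Set Ω}, MeasurableSet G → ν₂ G = ENNReal.ofReal (∫ ω in G, h ω ∂μ) := by
    intro G hG
    rw [hν₂, withDensity_apply _ hG,
      ← ofReal_integral_eq_lintegral_ofReal hhint.restrict (ae_restrict_of_ae hh0)]
  have hIntNonneg : ∀ (G : Set Ω), 0 ≤ ∫ ω in G, h ω ∂μ :=
    fun G => integral_nonneg_of_ae (ae_restrict_of_ae hh0)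
  -- core computation on the π-system
  have hcore : ∀ s ∈ π, ν₁ s = ν₂ s := by
    rintro s ⟨C, V, hC, hV, rfl⟩
    have hC0 : MeasurableSet C := hm₁ _ hC
    have hV0 : MeasurableSet V := hm₂ _ hV
    have h1 : ν₁ (C ∩ V) = μ (B ∩ C) * μ V := by
      rw [hν₁, Measure.restrict_apply (hC0.inter hV0), ← hprod C V hC hV]
      congr 1; ext x; simp; tauto
    have hint' : Integrable (C.indicator h) μ := hhint.indicator hC0
    have hce : μ[C.indicator h | m₂] =ᵐ[μ] fun _ => ∫ ω, C.indicator h ω ∂μ :=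
      condExp_indep_eq hm₁ hm₂ (hhm.indicator hC) hindep
    have h2 : ∫ ω in C ∩ V, h ω ∂μ = (μ V).toReal * (μ (B ∩ C)).toReal := by
      have e1 : ∫ ω in C ∩ V, h ω ∂μ = ∫ ω in V, C.indicator h ω ∂μ := by
        rw [setIntegral_indicator hC0, Set.inter_comm]
      have e2 : ∫ ω, C.indicator h ω ∂μ = (μ (B ∩ C)).toReal := by
        rw [integral_indicator hC0, ← hCB C hC]
      calc ∫ ω in C ∩ V, h ω ∂μ
          = ∫ ω in V, C.indicator h ω ∂μ := e1
        _ = ∫ ω in V, (μ[C.indicator h | m₂]) ω ∂μ :=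
            (setIntegral_condExp hm₂ hint' hV).symm
        _ = ∫ _ω in V, (∫ ω, C.indicator h ω ∂μ) ∂μ :=
            integral_congr_ae (ae_restrict_of_ae hce)
        _ = (μ V).toReal * ∫ ω, C.indicator h ω ∂μ := by
            rw [setIntegral_const, smul_eq_mul, measureReal_def]
        _ = (μ V).toReal * (μ (B ∩ C)).toReal := by rw [e2]
    rw [h1, hInt (hC0.inter hV0), h2, ENNReal.ofReal_mul ENNReal.toReal_nonneg,
      ENNReal.ofReal_toReal (measure_ne_top μ V), ENNReal.ofReal_toReal (measure_ne_top μ _),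
      mul_comm]
  have huniv : ν₁ Set.univ = ν₂ Set.univ := by
    have e1 : ν₁ Set.univ = μ B := by rw [hν₁, Measure.restrict_apply_univ]
    have e2 : (μ (B ∩ Set.univ)).toReal = ∫ ω in Set.univ, h ω ∂μ :=
      hCB Set.univ MeasurableSet.univ
    rw [e1, hInt MeasurableSet.univ, ← e2, Set.inter_univ,
      ENNReal.ofReal_toReal (measure_ne_top μ B)]
  intro G hG
  have hG0 : MeasurableSet G := hle _ hG
  have hGG : ν₁ G = ν₂ G :=
    ext_on_measurableSpace_of_generate_finite m0 π hcore hle hgen hpi huniv hG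
  have hr : ν₁ G = μ (B ∩ G) := by rw [hν₁, Measure.restrict_apply hG0, Set.inter_comm]
  rw [hr, hInt hG0] at hGG
  rw [hGG, ENNReal.toReal_ofReal (hIntNonneg G)]

/-- **Lemma 1(b) (Leung–Pei).** `Y0 t` is the potential-outcome process `{Y_t(0)}_{t ∈ ℤ}`, `D1`
the (binary) period-1 enrollment indicator, `υ` the idiosyncratic selection shock, and
`X¹ = (Y_{−K}(0), …, Y_0(0))` the covariate vector.  If `(D₁, {Y_t(0)}_{t∈ℤ})` is independent of
`υ`, `{Y_t(0)}_{t∈ℤ}` is jointly independent of `D₁` conditional on `X¹`, and `υ` is continuously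
distributed with a density (with respect to Lebesgue measure), then for every `t ≥ 1` and
`j = 1, 2`, `Y_t(0)` is independent of `D₁` conditional on the pair `(Y_j(0) + υ, X¹)`. -/
theorem lemma_conditional_independence_given_selection_index
    {Ω : Type*} [m0 : MeasurableSpace Ω] [StandardBorelSpace Ω] [Nonempty Ω]
    (μ : Measure Ω) [IsProbabilityMeasure μ]
    (Y0 : ℤ → Ω → ℝ) (hY0 : ∀ t, Measurable (Y0 t))
    (D1 : Ω → ℝ) (hD1meas : Measurable D1) (hD01 : ∀ ω, D1 ω = 0 ∨ D1 ω = 1)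
    (υ : Ω → ℝ) (hυmeas : Measurable υ)
    (K : ℕ)
    -- (i): (D₁, {Y_t(0)}_{t∈ℤ}) ⫫ υ
    (hindep : IndepFun (fun ω => (D1 ω, fun t : ℤ => Y0 t ω)) υ μ)
    -- (ii): {Y_t(0)}_{t∈ℤ} ⫫ D₁ | X¹, where X¹ = (Y_{−K}(0), …, Y_0(0))
    (hCI : CondIndepFun
      (MeasurableSpace.comap (fun ω => fun i : Fin (K + 1) => Y0 ((i : ℤ) - (K : ℤ)) ω)
        inferInstance)
      (Measurable.comap_le (measurable_pi_lambda _ (fun _ => hY0 _)))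
      (fun ω => fun t : ℤ => Y0 t ω) D1 μ)
    -- (iii): υ is continuously distributed with a density w.r.t. Lebesgue measure
    (hpdf : HasPDF υ μ) :
    ∀ (t : ℤ), 1 ≤ t → ∀ (j : ℤ), j = 1 ∨ j = 2 →
      CondIndepFun
        (MeasurableSpace.comap
          (fun ω => (Y0 j ω + υ ω, fun i : Fin (K + 1) => Y0 ((i : ℤ) - (K : ℤ)) ω))
          inferInstance)
        (Measurable.comap_le (((hY0 j).add hυmeas).prodMk
          (measurable_pi_lambda _ (fun _ => hY0 _))))
        (Y0 t) D1 μ := by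
  intro t _ht j _hj
  -- the various maps
  set Yf : Ω → (ℤ → ℝ) := fun ω => fun t : ℤ => Y0 t ω with hYfdef
  have hYfMeas : Measurable Yf := measurable_pi_lambda _ (fun t => hY0 t)
  set X : Ω → (Fin (K + 1) → ℝ) :=
    fun ω => fun i : Fin (K + 1) => Y0 ((i : ℤ) - (K : ℤ)) ω with hXdef
  have hXMeas : Measurable X := measurable_pi_lambda _ (fun i => hY0 _)
  set P : Ω → ℝ × (Fin (K + 1) → ℝ) := fun ω => (Y0 j ω + υ ω, X ω) with hPdef
  have hPMeas : Measurable P := ((hY0 j).add hυmeas).prodMk hXMeas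
  -- σ-algebra facts
  have hmY : MeasurableSpace.comap Yf inferInstance ≤ m0 := hYfMeas.comap_le
  have hmυ : MeasurableSpace.comap υ inferInstance ≤ m0 := hυmeas.comap_le
  have hmX : MeasurableSpace.comap X inferInstance ≤ m0 := hXMeas.comap_le
  have hm'' : MeasurableSpace.comap P inferInstance ≤ m0 := hPMeas.comap_le
  have hXmY : Measurable[MeasurableSpace.comap Yf inferInstance] X := by
    have hg : Measurable fun (y : ℤ → ℝ) => fun i : Fin (K + 1) => y ((i : ℤ) - (K : ℤ)) :=
      measurable_pi_lambda _ (fun i => measurable_pi_apply _)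
    exact hg.comp (comap_measurable Yf)
  have hXY : MeasurableSpace.comap X inferInstance ≤ MeasurableSpace.comap Yf inferInstance :=
    hXmY.comap_le
  have hXP : MeasurableSpace.comap X inferInstance ≤ MeasurableSpace.comap P inferInstance :=
    Measurable.comap_le (measurable_snd.comp (comap_measurable P))
  have hmP_le : MeasurableSpace.comap P inferInstance ≤
      MeasurableSpace.comap Yf inferInstance ⊔ MeasurableSpace.comap υ inferInstance := by
    have hY' : Measurable[MeasurableSpace.comap Yf inferInstance ⊔
        MeasurableSpace.comap υ inferInstance] Yf :=
      (comap_measurable Yf).mono le_sup_left le_rfl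
    have hυ' : Measurable[MeasurableSpace.comap Yf inferInstance ⊔
        MeasurableSpace.comap υ inferInstance] υ :=
      (comap_measurable υ).mono le_sup_right le_rfl
    have hYj : Measurable[MeasurableSpace.comap Yf inferInstance ⊔
        MeasurableSpace.comap υ inferInstance] (Y0 j) :=
      (measurable_pi_apply j).comp hY'
    have hX' : Measurable[MeasurableSpace.comap Yf inferInstance ⊔
        MeasurableSpace.comap υ inferInstance] X := hXmY.mono le_sup_left le_rfl
    exact Measurable.comap_le ((hYj.add hυ').prodMk hX')
  -- reduce to the condexp characterization
  refine (condIndepFun_iff_condExp_inter_preimage_eq_mul (hY0 t) hD1meas).mpr ?_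
  intro s u hs hu
  have hA0 : MeasurableSet (Y0 t ⁻¹' s) := (hY0 t) hs
  have hB0 : MeasurableSet (D1 ⁻¹' u) := hD1meas hu
  have hAmY : MeasurableSet[MeasurableSpace.comap Yf inferInstance] (Y0 t ⁻¹' s) :=
    ⟨(fun y : ℤ → ℝ => y t) ⁻¹' s, (measurable_pi_apply t) hs, rfl⟩
  -- the conditional probability of B given X
  set h : Ω → ℝ :=
    μ[(D1 ⁻¹' u).indicator (fun _ => (1:ℝ)) | MeasurableSpace.comap X inferInstance] with hhdef
  have hhmX : StronglyMeasurable[MeasurableSpace.comap X inferInstance] h :=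
    stronglyMeasurable_condExp
  have hhint : Integrable h μ := integrable_condExp
  have hI1 : Integrable ((D1 ⁻¹' u).indicator (fun _ => (1:ℝ))) μ :=
    (integrable_const 1).indicator hB0
  have hh0 : 0 ≤ᵐ[μ] h :=
    condExp_nonneg (Filter.Eventually.of_forall fun ω =>
      Set.indicator_nonneg (fun _ _ => zero_le_one) ω)
  have hle1 : h ≤ᵐ[μ] fun _ => (1:ℝ) := by
    have hmono := condExp_mono (μ := μ) (m := MeasurableSpace.comap X inferInstance)
      hI1 (integrable_const (1:ℝ))
      (Filter.Eventually.of_forall fun ω => by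
        by_cases hω : ω ∈ D1 ⁻¹' u <;>
          simp [Set.indicator_of_mem, Set.indicator_of_notMem, hω])
    refine hmono.trans ?_
    rw [condExp_const hmX (1:ℝ)]
  have hnorm : ∀ᵐ ω ∂μ, ‖h ω‖ ≤ 1 := by
    filter_upwards [hh0, hle1] with ω h0 h1
    rw [Real.norm_eq_abs, abs_of_nonneg h0]
    exact h1
  -- CI hypothesis in condexp form
  have hCIiff := (condIndepFun_iff_condExp_inter_preimage_eq_mul
    (μ := μ) (hm' := Measurable.comap_le (measurable_pi_lambda _ (fun _ => hY0 _)))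
    hYfMeas hD1meas).mp hCI
  -- independence in measure form
  have hind := indepFun_iff_measure_inter_preimage_eq_mul.mp hindep
  -- Step 1: h versions the conditional probability of B over σ(Yf)
  have hCB : ∀ C, MeasurableSet[MeasurableSpace.comap Yf inferInstance] C →
      (μ (D1 ⁻¹' u ∩ C)).toReal = ∫ ω in C, h ω ∂μ := by
    rintro C ⟨sC, hsC, rfl⟩
    have hC0 : MeasurableSet (Yf ⁻¹' sC) := hYfMeas hsC
    have hmul := hCIiff sC u hsC hu
    have hee : (fun ω => h ω * (Yf ⁻¹' sC).indicator (fun _ => (1:ℝ)) ω)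
        = (Yf ⁻¹' sC).indicator h := by
      funext ω
      by_cases hω : ω ∈ Yf ⁻¹' sC <;>
        simp [Set.indicator_of_mem, Set.indicator_of_notMem, hω]
    have hIA : Integrable ((Yf ⁻¹' sC).indicator (fun _ => (1:ℝ))) μ :=
      (integrable_const 1).indicator hC0
    have hIhA : Integrable (fun ω => h ω * (Yf ⁻¹' sC).indicator (fun _ => (1:ℝ)) ω) μ := by
      rw [hee]; exact hhint.indicator hC0
    have hpull : μ[(fun ω => h ω * (Yf ⁻¹' sC).indicator (fun _ => (1:ℝ)) ω) |
        MeasurableSpace.comap X inferInstance]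
        =ᵐ[μ] fun ω => h ω * (μ⟦Yf ⁻¹' sC | MeasurableSpace.comap X inferInstance⟧) ω :=
      condExp_mul_of_stronglyMeasurable_left (g := (Yf ⁻¹' sC).indicator (fun _ => (1:ℝ))) hhmX hIhA hIA
    calc (μ (D1 ⁻¹' u ∩ Yf ⁻¹' sC)).toReal
        = (μ (Yf ⁻¹' sC ∩ D1 ⁻¹' u)).toReal := by rw [Set.inter_comm]
      _ = ∫ ω, (Yf ⁻¹' sC ∩ D1 ⁻¹' u).indicator (fun _ => (1:ℝ)) ω ∂μ := by
          rw [integral_indicator (hC0.inter hB0), setIntegral_const, smul_eq_mul, mul_one, measureReal_def]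
      _ = ∫ ω, (μ⟦Yf ⁻¹' sC ∩ D1 ⁻¹' u | MeasurableSpace.comap X inferInstance⟧) ω ∂μ :=
          (integral_condExp hmX).symm
      _ = ∫ ω, (μ⟦Yf ⁻¹' sC | MeasurableSpace.comap X inferInstance⟧) ω * h ω ∂μ :=
          integral_congr_ae hmul
      _ = ∫ ω, h ω * (μ⟦Yf ⁻¹' sC | MeasurableSpace.comap X inferInstance⟧) ω ∂μ := by
          simp_rw [mul_comm]
      _ = ∫ ω, (μ[(fun ω => h ω * (Yf ⁻¹' sC).indicator (fun _ => (1:ℝ)) ω) |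
            MeasurableSpace.comap X inferInstance]) ω ∂μ :=
          (integral_congr_ae hpull).symm
      _ = ∫ ω, h ω * (Yf ⁻¹' sC).indicator (fun _ => (1:ℝ)) ω ∂μ := integral_condExp hmX
      _ = ∫ ω, (Yf ⁻¹' sC).indicator h ω ∂μ := by rw [hee]
      _ = ∫ ω in Yf ⁻¹' sC, h ω ∂μ := integral_indicator hC0
  -- product identities from (i)
  have hprod : ∀ C V, MeasurableSet[MeasurableSpace.comap Yf inferInstance] C →
      MeasurableSet[MeasurableSpace.comap υ inferInstance] V →
      μ (D1 ⁻¹' u ∩ C ∩ V) = μ (D1 ⁻¹' u ∩ C) * μ V := by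
    rintro C V ⟨sC, hsC, rfl⟩ ⟨sV, hsV, rfl⟩
    have e : (fun ω => (D1 ω, Yf ω)) ⁻¹' (u ×ˢ sC) = D1 ⁻¹' u ∩ Yf ⁻¹' sC :=
      Set.mk_preimage_prod _ _
    have h1 := hind (u ×ˢ sC) sV (hu.prod hsC) hsV
    rwa [e] at h1
  have hindep12 : Indep (MeasurableSpace.comap Yf inferInstance)
      (MeasurableSpace.comap υ inferInstance) μ := by
    rw [Indep_iff]
    rintro t1 t2 ⟨s1, hs1, rfl⟩ ⟨s2, hs2, rfl⟩
    have e : (fun ω => (D1 ω, Yf ω)) ⁻¹' (Set.univ ×ˢ s1) = Yf ⁻¹' s1 := by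
      rw [Set.mk_preimage_prod]; simp
    have h1 := hind (Set.univ ×ˢ s1) s2 (MeasurableSet.univ.prod hs1) hs2
    rwa [e] at h1
  -- the key extension
  have hkey := key_setIntegral μ hmY hmυ hB0 (hhmX.mono hXY) hhint hh0 hCB hprod hindep12
  -- (a): conditional probability of B given the selection index
  have haB : h =ᵐ[μ] μ⟦D1 ⁻¹' u | MeasurableSpace.comap P inferInstance⟧ := by
    refine ae_eq_condExp_of_forall_setIntegral_eq hm'' hI1
      (fun G _ _ => hhint.integrableOn) (fun G hG _ => ?_)
      (stronglyMeasurable_condExp.mono hXP).aestronglyMeasurable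
    have h1 : ∫ ω in G, (D1 ⁻¹' u).indicator (fun _ => (1:ℝ)) ω ∂μ
        = (μ (D1 ⁻¹' u ∩ G)).toReal := by
      rw [setIntegral_indicator hB0, setIntegral_const, smul_eq_mul, mul_one, measureReal_def, Set.inter_comm]
    rw [h1]
    exact (hkey G (hmP_le _ hG)).symm
  -- (b): factorization of the joint conditional probability
  have hbA : (fun ω => h ω * (μ⟦Y0 t ⁻¹' s | MeasurableSpace.comap P inferInstance⟧) ω)
      =ᵐ[μ] μ⟦Y0 t ⁻¹' s ∩ D1 ⁻¹' u | MeasurableSpace.comap P inferInstance⟧ := by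
    have hIAB : Integrable ((Y0 t ⁻¹' s ∩ D1 ⁻¹' u).indicator (fun _ => (1:ℝ))) μ :=
      (integrable_const 1).indicator (hA0.inter hB0)
    have hee2 : (fun ω => h ω * (Y0 t ⁻¹' s).indicator (fun _ => (1:ℝ)) ω)
        = (Y0 t ⁻¹' s).indicator h := by
      funext ω
      by_cases hω : ω ∈ Y0 t ⁻¹' s <;>
        simp [Set.indicator_of_mem, Set.indicator_of_notMem, hω]
    have hIA2 : Integrable ((Y0 t ⁻¹' s).indicator (fun _ => (1:ℝ))) μ :=
      (integrable_const 1).indicator hA0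
    have hIhA2 : Integrable (fun ω => h ω * (Y0 t ⁻¹' s).indicator (fun _ => (1:ℝ)) ω) μ := by
      rw [hee2]; exact hhint.indicator hA0
    have hpull2 : μ[(fun ω => h ω * (Y0 t ⁻¹' s).indicator (fun _ => (1:ℝ)) ω) |
        MeasurableSpace.comap P inferInstance]
        =ᵐ[μ] fun ω => h ω * (μ⟦Y0 t ⁻¹' s | MeasurableSpace.comap P inferInstance⟧) ω :=
      condExp_mul_of_stronglyMeasurable_left (g := (Y0 t ⁻¹' s).indicator (fun _ => (1:ℝ))) (stronglyMeasurable_condExp.mono hXP) hIhA2 hIA2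
    refine ae_eq_condExp_of_forall_setIntegral_eq hm'' hIAB
      (fun G _ _ => (Integrable.bdd_mul integrable_condExp
        ((stronglyMeasurable_condExp.mono hmX).aestronglyMeasurable) hnorm).integrableOn)
      (fun G hG _ => ?_)
      (((stronglyMeasurable_condExp.mono hXP).mul stronglyMeasurable_condExp).aestronglyMeasurable)
    have hGA : MeasurableSet[MeasurableSpace.comap Yf inferInstance ⊔
        MeasurableSpace.comap υ inferInstance] (G ∩ Y0 t ⁻¹' s) :=
      (hmP_le _ hG).inter ((le_sup_left : MeasurableSpace.comap Yf inferInstance ≤ _) _ hAmY)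
    calc ∫ ω in G, (h ω * (μ⟦Y0 t ⁻¹' s | MeasurableSpace.comap P inferInstance⟧) ω) ∂μ
        = ∫ ω in G, (μ[(fun ω => h ω * (Y0 t ⁻¹' s).indicator (fun _ => (1:ℝ)) ω) |
            MeasurableSpace.comap P inferInstance]) ω ∂μ :=
          integral_congr_ae (ae_restrict_of_ae hpull2.symm)
      _ = ∫ ω in G, h ω * (Y0 t ⁻¹' s).indicator (fun _ => (1:ℝ)) ω ∂μ :=
          setIntegral_condExp hm'' hIhA2 hG
      _ = ∫ ω in G, (Y0 t ⁻¹' s).indicator h ω ∂μ := by rw [hee2]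
      _ = ∫ ω in G ∩ Y0 t ⁻¹' s, h ω ∂μ := setIntegral_indicator hA0
      _ = (μ (D1 ⁻¹' u ∩ (G ∩ Y0 t ⁻¹' s))).toReal := (hkey _ hGA).symm
      _ = (μ (G ∩ (Y0 t ⁻¹' s ∩ D1 ⁻¹' u))).toReal := by
          rw [show D1 ⁻¹' u ∩ (G ∩ Y0 t ⁻¹' s) = G ∩ (Y0 t ⁻¹' s ∩ D1 ⁻¹' u) by
            ext x; simp only [Set.mem_inter_iff]; tauto]
      _ = ∫ ω in G, (Y0 t ⁻¹' s ∩ D1 ⁻¹' u).indicator (fun _ => (1:ℝ)) ω ∂μ := by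
          rw [setIntegral_indicator (hA0.inter hB0), setIntegral_const, smul_eq_mul, mul_one, measureReal_def]
  -- conclude
  filter_upwards [hbA, haB] with ω e1 e2
  rw [← e1, ← e2]
  ring
end
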